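/- For all 0 < t ≤ 1 and all P, Q ∈ ℝ³, if ρ_t(P,Q) < 2t then ρ_t(P,Q) = d_E(P,Q). -/

import Mathlib

noncomputable section

/-- The unit 2-sphere in `ℝ³`, i.e. in `EuclideanSpace ℝ (Fin 3)`. -/
def S2 : Set (EuclideanSpace ℝ (Fin 3)) := Metric.sphere (0 : EuclideanSpace ℝ (Fin 3)) 1

/-- The angle parameter `α = arcsin ((√(2 - t²) - t) / 2)`. -/
def alphaAngle (t : ℝ) : ℝ := Real.arcsin ((Real.sqrt (2 - t ^ 2) - t) / 2)

/-- The metric `d_t` on the unit sphere: `d_t(P,Q) = d_E(P,Q)` if `∠POQ ≤ π - 2α`,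
and `d_t(P,Q) = 2t + d_E(-P,Q)` otherwise. -/
def dt (t : ℝ) (P Q : EuclideanSpace ℝ (Fin 3)) : ℝ :=
  if EuclideanGeometry.angle P (0 : EuclideanSpace ℝ (Fin 3)) Q ≤ Real.pi - 2 * alphaAngle t
  then dist P Q
  else 2 * t + dist (-P) Q

/-- A point on the unit sphere at Euclidean distance `r` (for `0 ≤ r ≤ 2`) from the
base point `spherePt 0 = (1,0,0)`. -/
def spherePt (r : ℝ) : EuclideanSpace ℝ (Fin 3) :=
  (WithLp.equiv 2 (Fin 3 → ℝ)).symm ![1 - r ^ 2 / 2, r * Real.sqrt (1 - r ^ 2 / 4), 0]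

/-- The value `d_t(ε⁻¹(X), ε⁻¹(Y))` for points `X, Y ∈ ℝ³` with `d_E(X,Y) ≤ 2`, computed
via the concrete pair of unit-sphere points `spherePt 0`, `spherePt (d_E(X,Y))` at the same
Euclidean distance; by invariance of `d_t` under Euclidean isometries this agrees with the
value obtained from any isometric embedding `ε : S² → ℝ³` whose image contains `X` and `Y`. -/
def dtChord (t r : ℝ) : ℝ := dt t (spherePt 0) (spherePt r)

/-- The set of values `∑_{i=1}^n d_t(X_{i-1}, X_i)` over all chains
`(X_0, …, X_n) ∈ Γ_{P,Q}`, i.e. chains from `P` to `Q` with all steps of Euclidean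
length at most `2`. -/
def chainSums (t : ℝ) (P Q : EuclideanSpace ℝ (Fin 3)) : Set ℝ :=
  { s : ℝ | ∃ n : ℕ, ∃ X : Fin (n + 1) → EuclideanSpace ℝ (Fin 3),
      X 0 = P ∧ X (Fin.last n) = Q ∧
      (∀ i : Fin n, dist (X i.castSucc) (X i.succ) ≤ 2) ∧
      s = ∑ i : Fin n, dtChord t (dist (X i.castSucc) (X i.succ)) }

/-- The metric `ρ_t(P,Q) = inf { ∑_{i=1}^n d_t(X_{i-1},X_i) | (X_0,…,X_n) ∈ Γ_{P,Q} }`. -/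
def rho (t : ℝ) (P Q : EuclideanSpace ℝ (Fin 3)) : ℝ := sInf (chainSums t P Q)

lemma norm_spherePt (r : ℝ) (h0 : 0 ≤ r) (h2 : r ≤ 2) : ‖spherePt r‖ = 1 := by
  have hnn : 0 ≤ 1 - r ^ 2 / 4 := by nlinarith
  have hsq : (Real.sqrt (1 - r ^ 2 / 4)) ^ 2 = 1 - r ^ 2 / 4 := Real.sq_sqrt hnn
  rw [EuclideanSpace.norm_eq]
  simp only [spherePt, WithLp.equiv_symm_apply, WithLp.ofLp_toLp, Fin.sum_univ_three,
    Matrix.cons_val_zero, Matrix.cons_val_one, Matrix.head_cons, Matrix.cons_val_two,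
    Matrix.tail_cons, Real.norm_eq_abs, sq_abs]
  rw [show (1 - r ^ 2 / 2) ^ 2 + (r * Real.sqrt (1 - r ^ 2 / 4)) ^ 2 + 0 ^ 2 = 1 by
    rw [mul_pow, hsq]; ring]
  exact Real.sqrt_one

lemma dist_spherePt (r : ℝ) (h0 : 0 ≤ r) (h2 : r ≤ 2) : dist (spherePt 0) (spherePt r) = r := by
  have hnn : 0 ≤ 1 - r ^ 2 / 4 := by nlinarith
  have hsq : (Real.sqrt (1 - r ^ 2 / 4)) ^ 2 = 1 - r ^ 2 / 4 := Real.sq_sqrt hnn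
  rw [EuclideanSpace.dist_eq]
  simp only [spherePt, WithLp.equiv_symm_apply, WithLp.ofLp_toLp, Fin.sum_univ_three,
    Matrix.cons_val_zero, Matrix.cons_val_one, Matrix.head_cons, Matrix.cons_val_two,
    Matrix.tail_cons, Real.dist_eq, sq_abs]
  rw [show (1 - (0:ℝ) ^ 2 / 2 - (1 - r ^ 2 / 2)) ^ 2 +
      (0 * Real.sqrt (1 - 0 ^ 2 / 4) - r * Real.sqrt (1 - r ^ 2 / 4)) ^ 2
      + ((0:ℝ) - 0) ^ 2 = r ^ 2 by
    rw [zero_mul, zero_sub, neg_pow, mul_pow, hsq]; ring]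
  exact Real.sqrt_sq h0

lemma inner_spherePt (r : ℝ) :
    (inner ℝ (spherePt 0) (spherePt r) : ℝ) = 1 - r ^ 2 / 2 := by
  simp only [PiLp.inner_apply, RCLike.inner_apply, Fin.sum_univ_three, spherePt,
    WithLp.equiv_symm_apply, WithLp.ofLp_toLp, Matrix.cons_val_zero, Matrix.cons_val_one, Matrix.head_cons,
    Matrix.cons_val_two, Matrix.tail_cons]
  norm_num

lemma angle_spherePt (r : ℝ) (h0 : 0 ≤ r) (h2 : r ≤ 2) :
    EuclideanGeometry.angle (spherePt 0) 0 (spherePt r) = Real.arccos (1 - r ^ 2 / 2) := by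
  rw [EuclideanGeometry.angle, InnerProductGeometry.angle]
  simp only [vsub_eq_sub, sub_zero]
  rw [inner_spherePt, norm_spherePt 0 le_rfl (by norm_num), norm_spherePt r h0 h2]
  norm_num

lemma key_angle (t r : ℝ) (ht0 : 0 < t) (ht1 : t ≤ 1) (h0 : 0 ≤ r) (hr : r ≤ 2 * t) :
    Real.arccos (1 - r ^ 2 / 2) ≤ Real.pi - 2 * alphaAngle t := by
  set u := Real.sqrt (2 - t ^ 2) with hu
  have hu0 : 0 ≤ u := Real.sqrt_nonneg _
  have hu2 : u ^ 2 = 2 - t ^ 2 := Real.sq_sqrt (by nlinarith)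
  have hut : t ≤ u := by nlinarith
  set s := (u - t) / 2 with hs
  have hs0 : 0 ≤ s := by rw [hs]; linarith
  have hs1 : s ≤ 1 := by nlinarith
  have h2s : 2 * s ^ 2 - 1 = -(u * t) := by rw [hs]; nlinarith
  have halpha : Real.pi - 2 * alphaAngle t = Real.arccos (2 * s ^ 2 - 1) := by
    have hsin : Real.sin (alphaAngle t) = s := Real.sin_arcsin (by linarith) hs1
    have ha0 : 0 ≤ alphaAngle t := Real.arcsin_nonneg.2 hs0
    have ha2 : alphaAngle t ≤ Real.pi / 2 := Real.arcsin_le_pi_div_two _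
    rw [← Real.arccos_cos (x := Real.pi - 2 * alphaAngle t) (by linarith) (by linarith)]
    congr 1
    rw [Real.cos_pi_sub, Real.cos_two_mul, Real.cos_sq', hsin]
    ring
  rw [halpha, Real.arccos, Real.arccos]
  have : Real.arcsin (2 * s ^ 2 - 1) ≤ Real.arcsin (1 - r ^ 2 / 2) :=
    Real.monotone_arcsin (by nlinarith)
  linarith

lemma dtChord_nonneg (t r : ℝ) (ht : 0 ≤ t) : 0 ≤ dtChord t r := by
  rw [dtChord, dt]
  split
  · exact dist_nonneg
  · have := dist_nonneg (x := -spherePt 0) (y := spherePt r); linarith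

lemma dtChord_eq (t r : ℝ) (ht0 : 0 < t) (ht1 : t ≤ 1) (h0 : 0 ≤ r) (hr : r ≤ 2 * t) :
    dtChord t r = r := by
  have h2 : r ≤ 2 := by linarith
  rw [dtChord, dt, if_pos, dist_spherePt r h0 h2]
  rw [angle_spherePt r h0 h2]
  exact key_angle t r ht0 ht1 h0 hr

lemma dtChord_cases (t r : ℝ) (h0 : 0 ≤ r) (h2 : r ≤ 2) :
    dtChord t r = r ∨ 2 * t ≤ dtChord t r := by
  rw [dtChord, dt]
  split
  · exact Or.inl (dist_spherePt r h0 h2)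
  · right
    have := dist_nonneg (x := -spherePt 0) (y := spherePt r); linarith

set_option maxHeartbeats 1000000 in
lemma chain_lb (t : ℝ) (ht0 : 0 < t) (P Q : EuclideanSpace ℝ (Fin 3)) :
    ∀ s ∈ chainSums t P Q, min (2 * t) (dist P Q) ≤ s := by
  rintro s ⟨n, X, hX0, hXl, hstep, rfl⟩
  by_cases hall : ∀ i : Fin n,
      dtChord t (dist (X i.castSucc) (X i.succ)) = dist (X i.castSucc) (X i.succ)
  · -- every step is geodesic: sum of dists ≥ dist P Q
    have htel : dist P Q ≤ ∑ i : Fin n, dist (X i.castSucc) (X i.succ) := by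
      have hlt : ∀ i : ℕ, min i n < n + 1 := fun i => Nat.lt_succ_of_le (min_le_right _ _)
      have := dist_le_range_sum_dist (fun i => X ⟨min i n, hlt i⟩) n
      have h0' : X ⟨min 0 n, hlt 0⟩ = P := by
        rw [← hX0]; exact congrArg X (Fin.ext (by simp))
      have hn' : X ⟨min n n, hlt n⟩ = Q := by
        rw [← hXl]; exact congrArg X (Fin.ext (by simp [Fin.last]))
      rw [h0', hn'] at this
      refine this.trans (le_of_eq ?_)
      rw [← Fin.sum_univ_eq_sum_range (fun i => dist (X ⟨min i n, hlt i⟩) (X ⟨min (i+1) n, hlt (i+1)⟩)) n]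
      refine Finset.sum_congr rfl fun i _ => ?_
      have hi := i.isLt
      rw [congrArg X (Fin.ext (by simp [Nat.min_eq_left i.isLt.le]) :
            (⟨min (↑i) n, hlt i⟩ : Fin (n+1)) = i.castSucc),
        congrArg X (Fin.ext (by simp [Nat.min_eq_left i.isLt]) :
            (⟨min (↑i + 1) n, hlt (↑i+1)⟩ : Fin (n+1)) = i.succ)]
    calc min (2 * t) (dist P Q) ≤ dist P Q := min_le_right _ _
      _ ≤ ∑ i : Fin n, dist (X i.castSucc) (X i.succ) := htel
      _ = ∑ i : Fin n, dtChord t (dist (X i.castSucc) (X i.succ)) :=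
          (Finset.sum_congr rfl fun i _ => (hall i).symm)
  · -- some step flips: sum ≥ 2t
    push_neg at hall
    obtain ⟨i, hi⟩ := hall
    have hcase := dtChord_cases t (dist (X i.castSucc) (X i.succ)) dist_nonneg (hstep i)
    have h2t : 2 * t ≤ dtChord t (dist (X i.castSucc) (X i.succ)) := hcase.resolve_left hi
    calc min (2 * t) (dist P Q) ≤ 2 * t := min_le_left _ _
      _ ≤ dtChord t (dist (X i.castSucc) (X i.succ)) := h2t
      _ ≤ ∑ j : Fin n, dtChord t (dist (X j.castSucc) (X j.succ)) :=
          Finset.single_le_sum (f := fun j : Fin n => dtChord t (dist (X j.castSucc) (X j.succ)))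
            (fun j _ => dtChord_nonneg t _ ht0.le) (Finset.mem_univ i)

lemma chain_nonempty (t : ℝ) (P Q : EuclideanSpace ℝ (Fin 3)) :
    (chainSums t P Q).Nonempty := by
  obtain ⟨n, hn1, hd2⟩ : ∃ n : ℕ, 0 < n ∧ dist P Q ≤ 2 * n := by
    refine ⟨⌈dist P Q / 2⌉₊ + 1, Nat.succ_pos _, ?_⟩
    have := Nat.le_ceil (dist P Q / 2)
    push_cast
    linarith
  have hn0 : (0:ℝ) < n := by exact_mod_cast hn1
  refine ⟨_, n, fun i => P + (((i : ℕ) : ℝ) / n) • (Q - P), ?_, ?_, ?_, rfl⟩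
  · simp
  · simp only [Fin.val_last]
    rw [div_self hn0.ne', one_smul]
    abel
  · intro i
    have hstep : dist (P + (((i.castSucc : ℕ) : ℝ) / n) • (Q - P))
        (P + (((i.succ : ℕ) : ℝ) / n) • (Q - P)) = dist P Q / n := by
      rw [dist_add_left, dist_eq_norm, ← sub_smul, norm_smul]
      rw [Fin.coe_castSucc, Fin.val_succ]
      push_cast
      rw [show ((i:ℕ):ℝ)/(n:ℝ) - (((i:ℕ):ℝ)+1)/(n:ℝ) = -(1/(n:ℝ)) by ring]
      rw [norm_neg, ← dist_eq_norm, dist_comm]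
      rw [Real.norm_eq_abs, abs_of_pos (show (0:ℝ) < 1/(n:ℝ) by positivity)]
      ring
    rw [hstep, div_le_iff₀ hn0]
    linarith

theorem rho_eq_dist_of_rho_lt (t : ℝ) (ht0 : 0 < t) (ht1 : t ≤ 1)
    (P Q : EuclideanSpace ℝ (Fin 3)) (h : rho t P Q < 2 * t) :
    rho t P Q = dist P Q := by
  have hne := chain_nonempty t P Q
  have hlb := chain_lb t ht0 P Q
  have hbdd : BddBelow (chainSums t P Q) := ⟨_, hlb⟩
  have h1 : min (2 * t) (dist P Q) ≤ rho t P Q := le_csInf hne hlb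
  have hd : dist P Q < 2 * t := by
    by_contra hc
    push_neg at hc
    rw [min_eq_left hc] at h1
    linarith [h1.trans_lt h]
  -- upper bound: the one-step chain
  have hmem : dist P Q ∈ chainSums t P Q := by
    refine ⟨1, ![P, Q], rfl, rfl, ?_, ?_⟩
    · intro i
      fin_cases i
      simpa using le_trans hd.le (by linarith)
    · rw [Fin.sum_univ_one]
      have : (![P, Q] (0:Fin 1).castSucc) = P := rfl
      have h2 : (![P, Q] (0:Fin 1).succ) = Q := rfl
      rw [this, h2, dtChord_eq t (dist P Q) ht0 ht1 dist_nonneg hd.le]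
  have hub : rho t P Q ≤ dist P Q := csInf_le hbdd hmem
  have hlow : dist P Q ≤ rho t P Q := by
    rwa [min_eq_right hd.le] at h1
  linarith
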